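/- arXiv:1308.1064 — 2 statements merged into one kernel-verified Lean document; each statement's English description precedes it below -/
import Mathlib

section
/- Let f, a : [0,1] → ℝ be C² on (0,1], continuous on [0,1], with f(1) = t > 0, a(0) = a(1) = 0, and suppose both satisfy the same linear ODE: −f'' − f'/r + f/r² = W(r) f and −a'' − a'/r + a/r² = W(r) a on (0,1], where W is continuous, with ∫₀¹(|f'|² + f²/r²) r dr < ∞ and ∫₀¹(|a'|² + a²/r²) r dr < ∞. Then a'(1) = 0, and consequently a ≡ 0. -/
/-!
For two solutions `a`, `f` of the same equation `u'' = -u'/r + (1/r² - W) u`, Abel's identity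
makes `r (a' f - f' a)` a constant `c`. By AM-GM, `|a' f - f' a|` is dominated by the two
(integrable) energy densities, whereas `c / r` is not integrable at `0`; so `c = 0`. Then `a / f`
is locally constant near `r = 1`, where `f > 0`, and `a 1 = 0` makes `a` vanish on some
`(l, 1]`; in particular `a'(1) = 0`, and uniqueness for the linear ODE spreads `a = 0` to `(0, 1]`.
-/

open MeasureTheory Set Filter Topology

theorem lipschitzWith_companion (α β : ℝ) :
    LipschitzWith (max 1 (‖α‖₊ + ‖β‖₊)) fun y : ℝ × ℝ => (y.2, α * y.2 + β * y.1) := by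
  have h₂ := (lipschitzWith_smul α).comp (LipschitzWith.prod_snd (α := ℝ) (β := ℝ))
  have h₁ := (lipschitzWith_smul β).comp (LipschitzWith.prod_fst (α := ℝ) (β := ℝ))
  simpa using LipschitzWith.prod_snd.prodMk (h₂.add h₁)

theorem ODE_linear_secondOrder_eqOn_zero {u u' p q : ℝ → ℝ} {lo hi t₀ : ℝ}
    (hp : ContinuousOn p (Icc lo hi)) (hq : ContinuousOn q (Icc lo hi))
    (hu : ∀ r ∈ Ioo lo hi, HasDerivAt u (u' r) r)
    (hu' : ∀ r ∈ Ioo lo hi, HasDerivAt u' (p r * u' r + q r * u r) r)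
    (ht₀ : t₀ ∈ Ioo lo hi) (h₀ : u t₀ = 0) (h₀' : u' t₀ = 0) :
    EqOn u 0 (Ioo lo hi) := by
  have hbound {x C : ℝ} (h : ‖x‖ ≤ C) : ‖x‖₊ ≤ C.toNNReal :=
    (Real.le_toNNReal_iff_coe_le ((norm_nonneg x).trans h)).mpr h
  obtain ⟨P, hP⟩ := isCompact_Icc.exists_bound_of_continuousOn hp
  obtain ⟨Q, hQ⟩ := isCompact_Icc.exists_bound_of_continuousOn hq
  have hLip : ∀ r ∈ Ioo lo hi, LipschitzOnWith (max 1 (P.toNNReal + Q.toNNReal))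
      (fun y : ℝ × ℝ => (y.2, p r * y.2 + q r * y.1)) univ := fun r hr => by
    refine ((lipschitzWith_companion _ _).weaken ?_).lipschitzOnWith
    have hr' := Ioo_subset_Icc_self hr
    gcongr
    exacts [hbound (hP r hr'), hbound (hQ r hr')]
  have hsol := ODE_solution_unique_of_mem_Ioo hLip ht₀ (f := fun r => (u r, u' r))
    (g := fun _ => 0) (fun r hr => ⟨(hu r hr).prodMk (hu' r hr), mem_univ _⟩)
    (fun r _ => ⟨(hasDerivAt_const r 0).congr_deriv (by simp [Prod.zero_eq_mk]), mem_univ _⟩)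
    (by simp [h₀, h₀'])
  exact fun r hr => congrArg Prod.fst (hsol hr)

theorem hasDerivAt_wronskian {u v u' v' p q : ℝ → ℝ} {x : ℝ}
    (hu : HasDerivAt u (u' x) x) (hu' : HasDerivAt u' (p x * u' x + q x * u x) x)
    (hv : HasDerivAt v (v' x) x) (hv' : HasDerivAt v' (p x * v' x + q x * v x) x) :
    HasDerivAt (fun r => u' r * v r - v' r * u r) (p x * (u' x * v x - v' x * u x)) x :=
  ((hu'.mul hv).sub (hv'.mul hu)).congr_deriv (by ring)

theorem abs_wronskian_le {x y x' y' r : ℝ} (hr : 0 < r) :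
    |x' * y - y' * x| ≤ ((x' ^ 2 + x ^ 2 / r ^ 2) * r + (y' ^ 2 + y ^ 2 / r ^ 2) * r) / 2 := by
  have hrhs : ((x' ^ 2 + x ^ 2 / r ^ 2) * r + (y' ^ 2 + y ^ 2 / r ^ 2) * r) / 2
      = ((r * x') ^ 2 + y ^ 2 + (r * y') ^ 2 + x ^ 2) / (2 * r) := by
    field_simp; ring
  rw [hrhs, le_div_iff₀ (by positivity)]
  have htri : |x' * y - y' * x| ≤ |x'| * |y| + |y'| * |x| := by
    simpa only [abs_mul] using abs_sub (x' * y) (y' * x)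
  nlinarith [sq_nonneg (r * |x'| - |y|), sq_nonneg (r * |y'| - |x|), sq_abs x, sq_abs y,
    sq_abs x', sq_abs y']

theorem eq_zero_of_integrableOn_mul_inv {c : ℝ}
    (h : IntegrableOn (fun r => c * r⁻¹) (Ioo 0 1)) : c = 0 := by
  by_contra hc
  have hinv : IntervalIntegrable (fun r : ℝ => r⁻¹) volume 0 1 := by
    rw [intervalIntegrable_iff_integrableOn_Ioo_of_le zero_le_one]
    simpa [IntegrableOn, hc] using h.const_mul c⁻¹
  simpa using intervalIntegrable_inv_iff.mp hinv

theorem eqOn_zero_of_wronskian_eq_zero {u v u' v' : ℝ → ℝ} {l b : ℝ}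
    (hu : ∀ x ∈ Ioo l b, HasDerivAt u (u' x) x) (hv : ∀ x ∈ Ioo l b, HasDerivAt v (v' x) x)
    (hw : ∀ x ∈ Ioo l b, u' x * v x = v' x * u x)
    (huc : ContinuousOn u (Ioc l b)) (hvc : ContinuousOn v (Ioc l b))
    (hv0 : ∀ x ∈ Ioc l b, v x ≠ 0) (hub : u b = 0) : EqOn u 0 (Ioc l b) := by
  intro x hx
  have hsub : Icc x b ⊆ Ioc l b := fun y hy => ⟨hx.1.trans_le hy.1, hy.2⟩
  have hconst := constant_of_has_deriv_right_zero (f := fun y => u y / v y)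
    ((huc.mono hsub).div (hvc.mono hsub) fun y hy => hv0 y (hsub hy)) (fun y hy => by
      have hy' : y ∈ Ioo l b := ⟨hx.1.trans_le hy.1, hy.2⟩
      exact ((hu y hy').div (hv y hy') (hv0 y (Ioo_subset_Ioc_self hy'))).hasDerivWithinAt
        |>.congr_deriv (by rw [hw y hy']; ring))
    b (right_mem_Icc.2 hx.2)
  simp only [hub, zero_div, eq_comm (a := (0:ℝ)), div_eq_zero_iff] at hconst
  exact hconst.resolve_right (hv0 x hx)

theorem deriv_eq_zero_of_eqOn_Ioc {u : ℝ → ℝ} {l b : ℝ} (hl : l < b) (h : EqOn u 0 (Ioc l b)) :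
    deriv u b = 0 := by
  by_cases hd : DifferentiableAt ℝ u b
  · have hev : u =ᶠ[𝓝[≤] b] 0 := mem_nhdsLE_iff_exists_Ioc_subset.2 ⟨l, hl, h⟩
    rw [← hd.derivWithin (uniqueDiffWithinAt_Iic b), hev.derivWithin_eq (h ⟨hl, le_rfl⟩)]
    simp
  · exact deriv_zero_of_not_differentiableAt hd

theorem hasDerivAt_radial {u W : ℝ → ℝ} (hu : ContDiffOn ℝ 2 u (Ioc 0 1))
    (heq : ∀ r ∈ Ioc (0:ℝ) 1, -(deriv (deriv u) r) - deriv u r / r + u r / r ^ 2 = W r * u r)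
    {r : ℝ} (hr : r ∈ Ioo 0 1) :
    HasDerivAt u (deriv u r) r ∧
      HasDerivAt (deriv u) (-r⁻¹ * deriv u r + ((r ^ 2)⁻¹ - W r) * u r) r := by
  have ho : ContDiffOn ℝ 2 u (Ioo 0 1) := hu.mono Ioo_subset_Ioc_self
  have hn := isOpen_Ioo.mem_nhds hr
  refine ⟨((ho.differentiableOn (by norm_num)).differentiableAt hn).hasDerivAt, ?_⟩
  have hu'' := (((ho.deriv_of_isOpen isOpen_Ioo (m := 1) (by norm_num)).differentiableOn
    one_ne_zero).differentiableAt hn).hasDerivAt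
  exact hu''.congr_deriv (by linear_combination -heq r (Ioo_subset_Ioc_self hr))

theorem exists_mul_wronskian_eq {u v u' v' q : ℝ → ℝ}
    (hu : ∀ r ∈ Ioo 0 1, HasDerivAt u (u' r) r)
    (hu' : ∀ r ∈ Ioo 0 1, HasDerivAt u' (-r⁻¹ * u' r + q r * u r) r)
    (hv : ∀ r ∈ Ioo 0 1, HasDerivAt v (v' r) r)
    (hv' : ∀ r ∈ Ioo 0 1, HasDerivAt v' (-r⁻¹ * v' r + q r * v r) r) :
    ∃ c, ∀ r ∈ Ioo (0:ℝ) 1, r * (u' r * v r - v' r * u r) = c := by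
  have hd : ∀ r ∈ Ioo (0:ℝ) 1, HasDerivAt (fun r => r * (u' r * v r - v' r * u r)) 0 r :=
    fun r hr => ((hasDerivAt_id' r).mul (hasDerivAt_wronskian (p := fun r => -r⁻¹)
      (hu r hr) (hu' r hr) (hv r hr) (hv' r hr))).congr_deriv (by field_simp [hr.1.ne']; ring)
  exact isOpen_Ioo.exists_is_const_of_deriv_eq_zero isPreconnected_Ioo
    (fun r hr => (hd r hr).differentiableAt.differentiableWithinAt) fun r hr => (hd r hr).deriv

theorem mul_wronskian_eq_zero_of_integrableOn {u v u' v' : ℝ → ℝ} {c : ℝ}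
    (hc : ∀ r ∈ Ioo (0:ℝ) 1, r * (u' r * v r - v' r * u r) = c)
    (hu : IntegrableOn (fun r => (u' r ^ 2 + u r ^ 2 / r ^ 2) * r) (Ioc 0 1))
    (hv : IntegrableOn (fun r => (v' r ^ 2 + v r ^ 2 / r ^ 2) * r) (Ioc 0 1)) : c = 0 := by
  refine eq_zero_of_integrableOn_mul_inv <| (IntegrableOn.mono_set ((hu.add hv).div_const 2)
    Ioo_subset_Ioc_self).mono' (measurable_const.mul measurable_inv).aestronglyMeasurable ?_
  filter_upwards [ae_restrict_mem measurableSet_Ioo] with r hr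
  have hw : c * r⁻¹ = u' r * v r - v' r * u r := by
    rw [← hc r hr]; field_simp [hr.1.ne']
  rw [hw, Real.norm_eq_abs]
  exact abs_wronskian_le hr.1

theorem eqOn_zero_of_radial {u W : ℝ → ℝ} {l : ℝ} (hW : ContinuousOn W (Ioc 0 1))
    (hu : ∀ r ∈ Ioo (0:ℝ) 1, HasDerivAt u (deriv u r) r ∧
      HasDerivAt (deriv u) (-r⁻¹ * deriv u r + ((r ^ 2)⁻¹ - W r) * u r) r)
    (hl : l < 1) (h : EqOn u 0 (Ioo l 1)) : EqOn u 0 (Ioo 0 1) := by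
  intro r hr
  have ht₀ : max r ((l + 1) / 2) ∈ Ioo l 1 :=
    ⟨lt_max_of_lt_right (by linarith), max_lt hr.2 (by linarith)⟩
  have hsub : Icc (r / 2) 1 ⊆ Ioc 0 1 := fun s hs => ⟨by linarith [hs.1, hr.1], hs.2⟩
  have hsubo : Ioo (r / 2) 1 ⊆ Ioo 0 1 := fun s hs => ⟨by linarith [hs.1, hr.1], hs.2⟩
  exact ODE_linear_secondOrder_eqOn_zero (p := fun s => -s⁻¹) (q := fun s => (s ^ 2)⁻¹ - W s)
    (continuousOn_id.inv₀ fun s hs => (hsub hs).1.ne').neg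
    (((continuousOn_pow 2).inv₀ fun s hs => pow_ne_zero 2 (hsub hs).1.ne').sub (hW.mono hsub))
    (fun s hs => (hu s (hsubo hs)).1) (fun s hs => (hu s (hsubo hs)).2)
    ⟨(half_lt_self hr.1).trans_le (le_max_left _ _), ht₀.2⟩ (h ht₀)
    ((h.eventuallyEq_of_mem (isOpen_Ioo.mem_nhds ht₀)).deriv_eq.trans (by simp))
    ⟨half_lt_self hr.1, hr.2⟩

theorem integration_by_parts_forces_zero_general (f a W : ℝ → ℝ) (t : ℝ) (ht : 0 < t)
    (hf2 : ContDiffOn ℝ 2 f (Set.Ioc 0 1)) (ha2 : ContDiffOn ℝ 2 a (Set.Ioc 0 1))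
    (hfc : ContinuousOn f (Set.Icc 0 1)) (hac : ContinuousOn a (Set.Icc 0 1))
    (hW : ContinuousOn W (Set.Ioc 0 1))
    (hf1 : f 1 = t) (ha1 : a 1 = 0)
    (hfeq : ∀ r ∈ Set.Ioc (0:ℝ) 1,
      -(deriv (deriv f) r) - deriv f r / r + f r / r ^ 2 = W r * f r)
    (haeq : ∀ r ∈ Set.Ioc (0:ℝ) 1,
      -(deriv (deriv a) r) - deriv a r / r + a r / r ^ 2 = W r * a r)
    (hfint : IntegrableOn (fun r => ((deriv f r) ^ 2 + (f r) ^ 2 / r ^ 2) * r)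
      (Set.Ioc 0 1))
    (haint : IntegrableOn (fun r => ((deriv a r) ^ 2 + (a r) ^ 2 / r ^ 2) * r)
      (Set.Ioc 0 1)) :
    deriv a 1 = 0 ∧ ∀ r ∈ Set.Ioc (0:ℝ) 1, a r = 0 := by
  have hf := fun r (hr : r ∈ Ioo (0:ℝ) 1) => hasDerivAt_radial hf2 hfeq hr
  have ha := fun r (hr : r ∈ Ioo (0:ℝ) 1) => hasDerivAt_radial ha2 haeq hr
  obtain ⟨c, hc⟩ := exists_mul_wronskian_eq (fun r hr => (ha r hr).1) (fun r hr => (ha r hr).2)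
    (fun r hr => (hf r hr).1) (fun r hr => (hf r hr).2)
  have hw : ∀ r ∈ Ioo (0:ℝ) 1, deriv a r * f r = deriv f r * a r := fun r hr => by
    have hr0 := hc r hr
    rw [mul_wronskian_eq_zero_of_integrableOn hc haint hfint, mul_eq_zero] at hr0
    exact sub_eq_zero.1 (hr0.resolve_left hr.1.ne')
  obtain ⟨l, hl, hlf⟩ : ∃ l ∈ Iio (1:ℝ), Ioc l 1 ⊆ {r | 0 < f r} ∩ Ioi 0 := by
    refine mem_nhdsLE_iff_exists_Ioc_subset.1
      (inter_mem ?_ (nhdsWithin_le_nhds (Ioi_mem_nhds one_pos)))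
    rw [← nhdsWithin_Icc_eq_nhdsLE one_pos]
    exact hfc 1 (right_mem_Icc.2 zero_le_one) (Ioi_mem_nhds (hf1 ▸ ht))
  have hIoo : Ioo l 1 ⊆ Ioo 0 1 := fun r hr => ⟨(hlf (Ioo_subset_Ioc_self hr)).2, hr.2⟩
  have hIoc : Ioc l 1 ⊆ Icc 0 1 := fun r hr => ⟨(hlf hr).2.le, hr.2⟩
  have hal : EqOn a 0 (Ioc l 1) := eqOn_zero_of_wronskian_eq_zero
    (fun r hr => (ha r (hIoo hr)).1) (fun r hr => (hf r (hIoo hr)).1) (fun r hr => hw r (hIoo hr))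
    (hac.mono hIoc) (hfc.mono hIoc) (fun r hr => (hlf hr).1.ne') ha1
  refine ⟨deriv_eq_zero_of_eqOn_Ioc hl hal, fun r hr => ?_⟩
  rcases hr.2.eq_or_lt with rfl | hr1
  · exact ha1
  · exact eqOn_zero_of_radial hW ha hl (hal.mono Ioo_subset_Ioc_self) ⟨hr.1, hr1⟩

theorem integration_by_parts_forces_zero (f a W : ℝ → ℝ) (t : ℝ) (ht : 0 < t)
    (hf2 : ContDiffOn ℝ 2 f (Set.Ioc 0 1)) (ha2 : ContDiffOn ℝ 2 a (Set.Ioc 0 1))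
    (hfc : ContinuousOn f (Set.Icc 0 1)) (hac : ContinuousOn a (Set.Icc 0 1))
    (hW : ContinuousOn W (Set.Ioc 0 1))
    (hf1 : f 1 = t) (ha0 : a 0 = 0) (ha1 : a 1 = 0)
    (hfeq : ∀ r ∈ Set.Ioc (0:ℝ) 1,
      -(deriv (deriv f) r) - deriv f r / r + f r / r ^ 2 = W r * f r)
    (haeq : ∀ r ∈ Set.Ioc (0:ℝ) 1,
      -(deriv (deriv a) r) - deriv a r / r + a r / r ^ 2 = W r * a r)
    (hfint : IntegrableOn (fun r => ((deriv f r) ^ 2 + (f r) ^ 2 / r ^ 2) * r)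
      (Set.Ioc 0 1))
    (haint : IntegrableOn (fun r => ((deriv a r) ^ 2 + (a r) ^ 2 / r ^ 2) * r)
      (Set.Ioc 0 1)) :
    deriv a 1 = 0 ∧ ∀ r ∈ Set.Ioc (0:ℝ) 1, a r = 0 :=
  integration_by_parts_forces_zero_general f a W t ht hf2 ha2 hfc hac hW hf1 ha1 hfeq haeq hfint
    haint
end

section
/- Let A₊, A₋ > 0, B² < A₊A₋, t₊, t₋ > 0, λ_s the smallest eigenvalue of [[A₊,B],[B,A₋]], and M = max{A₊t₊² + Bt₋², A₋t₋² + Bt₊²}. Suppose Ψ = (ψ₊, ψ₋) : Ω̄ → ℂ² is a C² solution of −Δψ_± = −[A_±(|ψ_±|² − t_±²) + B(|ψ_∓|² − t_∓²)]ψ_± in a bounded domain Ω with |ψ₊|² + |ψ₋|² ≤ t₊² + t₋² on ∂Ω. If the function v = |ψ₊|² + |ψ₋|² attains an interior maximum at x₀ with v(x₀) > 2M/λ_s, then Δv(x₀) > 0, contradicting the maximum; hence |Ψ(x)|² ≤ max{2M/λ_s, t₊² + t₋²} in Ω. -/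
/-!
At an interior maximum `x₀` of `v = ‖ψ₊‖² + ‖ψ₋‖²` every second directional derivative of `v` is
nonpositive, and `½ ∂ᵤ²v = ‖∂ᵤψ₊‖² + ‖∂ᵤψ₋‖² + ⟪ψ₊, ∂ᵤ²ψ₊⟫ + ⟪ψ₋, ∂ᵤ²ψ₋⟫`; summing over the
coordinate directions gives `⟪ψ₊, Δψ₊⟫ + ⟪ψ₋, Δψ₋⟫ ≤ 0`. By the equations the left side is the
potential `Q(a, b) - (A₊t₊² + Bt₋²) a - (A₋t₋² + Bt₊²) b` at `a = |ψ₊|²`, `b = |ψ₋|²`, where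
`Q(a, b) = A₊a² + 2Bab + A₋b² ≥ λ_s (a² + b²) ≥ λ_s (a + b)² / 2`. Hence it is at least
`(a + b)(λ_s (a + b) / 2 - M)`, which is positive once `a + b > 2M/λ_s`. Otherwise the maximum of
`v` over the compact set `closure Ω` is either at most `2M/λ_s` or attained on the boundary.
-/

/-- The Laplacian of a `ℂ`-valued function on `ℝ²`, as the sum of second
partial derivatives in the coordinate directions. -/
noncomputable def lap2 (ψ : EuclideanSpace ℝ (Fin 2) → ℂ)
    (x : EuclideanSpace ℝ (Fin 2)) : ℂ :=
  ∑ i : Fin 2,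
    fderiv ℝ (fun y => fderiv ℝ ψ y (EuclideanSpace.basisFun (Fin 2) ℝ i)) x
      (EuclideanSpace.basisFun (Fin 2) ℝ i)

open Filter Topology Set
open scoped InnerProductSpace

theorem IsLocalMax.deriv2_nonpos_of_hasDerivAt {f f' : ℝ → ℝ} {a c : ℝ}
    (hf : ∀ᶠ t in 𝓝 a, HasDerivAt f (f' t) t) (hf' : HasDerivAt f' c a)
    (hmax : IsLocalMax f a) : c ≤ 0 := by
  by_contra! hc
  have hderiv : deriv f =ᶠ[𝓝 a] f' := hf.mono fun t ht => ht.deriv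
  have hderiv2 : deriv (deriv f) a = c := hderiv.deriv_eq.trans hf'.deriv
  -- `c > 0` would make `a` also a local min, so `f` would be locally constant and `c = 0`
  have hmin : IsLocalMin f a :=
    isLocalMin_of_deriv_deriv_pos (hderiv2 ▸ hc)
      (hderiv.eq_of_nhds.trans (hmax.hasDerivAt_eq_zero hf.self_of_nhds))
      hf.self_of_nhds.continuousAt
  have hconst : f =ᶠ[𝓝 a] fun _ => f a :=
    (hmin.and hmax).mono fun _ ht => le_antisymm ht.2 ht.1
  have : deriv (deriv f) a = 0 := by
    rw [hconst.deriv.deriv_eq]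
    simp
  linarith

section LineRestriction

variable {E F G : Type*} [NormedAddCommGroup E] [NormedSpace ℝ E]
  [NormedAddCommGroup F] [InnerProductSpace ℝ F] [NormedAddCommGroup G] [NormedSpace ℝ G]

theorem tendsto_add_smul_nhds_zero (x u : E) :
    Tendsto (fun t : ℝ => x + t • u) (𝓝 0) (𝓝 x) :=
  (by fun_prop : Continuous fun t : ℝ => x + t • u).tendsto' 0 x (by simp)

theorem DifferentiableAt.hasDerivAt_add_smul {f : E → G} {x u : E} {t : ℝ}
    (hf : DifferentiableAt ℝ f (x + t • u)) :
    HasDerivAt (fun s : ℝ => f (x + s • u)) (fderiv ℝ f (x + t • u) u) t := by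
  have hline : HasDerivAt (fun s : ℝ => x + s • u) u t := by
    simpa using ((hasDerivAt_id t).smul_const u).const_add x
  exact hf.hasFDerivAt.comp_hasDerivAt t hline

theorem ContDiffAt.eventually_hasDerivAt_norm_sq_add_smul {ψ : E → F} {x : E}
    (hψ : ContDiffAt ℝ 2 ψ x) (u : E) :
    ∀ᶠ t in 𝓝 (0 : ℝ), HasDerivAt (fun s : ℝ => ‖ψ (x + s • u)‖ ^ 2)
      (2 * ⟪ψ (x + t • u), fderiv ℝ ψ (x + t • u) u⟫_ℝ) t := by
  filter_upwards [tendsto_add_smul_nhds_zero x u (hψ.eventually (by simp))]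
    with t (ht : ContDiffAt ℝ 2 ψ (x + t • u))
  exact (ht.differentiableAt two_ne_zero).hasDerivAt_add_smul.norm_sq

theorem ContDiffAt.hasDerivAt_inner_fderiv_add_smul {ψ : E → F} {x : E}
    (hψ : ContDiffAt ℝ 2 ψ x) (u : E) :
    HasDerivAt (fun t : ℝ => 2 * ⟪ψ (x + t • u), fderiv ℝ ψ (x + t • u) u⟫_ℝ)
      (2 * (⟪ψ x, fderiv ℝ (fun y => fderiv ℝ ψ y u) x u⟫_ℝ + ‖fderiv ℝ ψ x u‖ ^ 2)) 0 := by
  have hx : x + (0 : ℝ) • u = x := by simp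
  have hψ' : DifferentiableAt ℝ ψ (x + (0 : ℝ) • u) := by
    simpa using hψ.differentiableAt two_ne_zero
  have hdψ : DifferentiableAt ℝ (fun y => fderiv ℝ ψ y u) (x + (0 : ℝ) • u) := by
    simpa using ((hψ.fderiv_right (m := 1) le_rfl).differentiableAt one_ne_zero).clm_apply
      (differentiableAt_const u)
  have h := (hψ'.hasDerivAt_add_smul.inner ℝ hdψ.hasDerivAt_add_smul).const_mul 2
  rwa [hx, real_inner_self_eq_norm_sq] at h

theorem IsLocalMax.inner_fderiv_fderiv_add_nonpos {ψ φ : E → F} {x : E}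
    (hψ : ContDiffAt ℝ 2 ψ x) (hφ : ContDiffAt ℝ 2 φ x)
    (hmax : IsLocalMax (fun y => ‖ψ y‖ ^ 2 + ‖φ y‖ ^ 2) x) (u : E) :
    ⟪ψ x, fderiv ℝ (fun y => fderiv ℝ ψ y u) x u⟫_ℝ +
      ⟪φ x, fderiv ℝ (fun y => fderiv ℝ φ y u) x u⟫_ℝ ≤ 0 := by
  have hline : IsLocalMax (fun t : ℝ => ‖ψ (x + t • u)‖ ^ 2 + ‖φ (x + t • u)‖ ^ 2) 0 :=
    IsMaxFilter.comp_tendsto (f := fun y => ‖ψ y‖ ^ 2 + ‖φ y‖ ^ 2) (b := 0)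
      (by rw [zero_smul, add_zero]; exact hmax) (tendsto_add_smul_nhds_zero x u)
  have h := hline.deriv2_nonpos_of_hasDerivAt
    ((hψ.eventually_hasDerivAt_norm_sq_add_smul u).and
      (hφ.eventually_hasDerivAt_norm_sq_add_smul u) |>.mono fun _ h => h.1.add h.2)
    ((hψ.hasDerivAt_inner_fderiv_add_smul u).add (hφ.hasDerivAt_inner_fderiv_add_smul u))
  nlinarith [sq_nonneg ‖fderiv ℝ ψ x u‖, sq_nonneg ‖fderiv ℝ φ x u‖]

end LineRestriction

/-- The smallest eigenvalue of the symmetric matrix `!![p, B; B, q]`. -/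
noncomputable def smallestEigenvalue (p q B : ℝ) : ℝ :=
  ((p + q) - √((p - q) ^ 2 + 4 * B ^ 2)) / 2

theorem smallestEigenvalue_mul_le (p q B a b : ℝ) :
    smallestEigenvalue p q B * (a ^ 2 + b ^ 2) ≤ p * a ^ 2 + 2 * B * a * b + q * b ^ 2 := by
  set s := √((p - q) ^ 2 + 4 * B ^ 2)
  have hs : s ^ 2 = (p - q) ^ 2 + 4 * B ^ 2 := Real.sq_sqrt (by positivity)
  have habs : |p - q| ≤ s := Real.abs_le_sqrt (by nlinarith)
  obtain ⟨hα, hβ⟩ : 0 ≤ s + (p - q) ∧ 0 ≤ s - (p - q) := ⟨by linarith [neg_abs_le (p - q)],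
    by linarith [le_abs_self (p - q)]⟩
  -- `p - λ = (s + (p - q)) / 2` and `q - λ = (s - (p - q)) / 2` have product `B²`
  have hdet : (s + (p - q)) * (s - (p - q)) = 4 * B ^ 2 := by nlinarith
  suffices 0 ≤ (s + (p - q)) * a ^ 2 + 4 * B * a * b + (s - (p - q)) * b ^ 2 by
    unfold smallestEigenvalue; nlinarith
  rcases hα.eq_or_lt with hα0 | hαpos
  · have hB : B = 0 := by nlinarith
    rw [← hα0, hB]; nlinarith [mul_nonneg hβ (sq_nonneg b)]
  · nlinarith [sq_nonneg ((s + (p - q)) * a + 2 * B * b)]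

theorem smallestEigenvalue_pos {p q B : ℝ} (hp : 0 < p) (hdet : B ^ 2 < p * q) :
    0 < smallestEigenvalue p q B := by
  have hq : 0 < q := by nlinarith
  have : √((p - q) ^ 2 + 4 * B ^ 2) < p + q := (Real.sqrt_lt' (by linarith)).2 (by nlinarith)
  unfold smallestEigenvalue
  linarith

theorem coupled_potential_pos {Ap Am B sp sm a b : ℝ} (hAp : 0 < Ap) (hdet : B ^ 2 < Ap * Am)
    (hsp : 0 ≤ sp) (hsm : 0 ≤ sm) (ha : 0 ≤ a) (hb : 0 ≤ b)
    (hab : 2 * max (Ap * sp + B * sm) (Am * sm + B * sp) / smallestEigenvalue Ap Am B < a + b) :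
    0 < (Ap * (a - sp) + B * (b - sm)) * a + (Am * (b - sm) + B * (a - sp)) * b := by
  set lam := smallestEigenvalue Ap Am B
  set M := max (Ap * sp + B * sm) (Am * sm + B * sp)
  have hlam : 0 < lam := smallestEigenvalue_pos hAp hdet
  have hM₁ : Ap * sp + B * sm ≤ M := le_max_left _ _
  have hM₂ : Am * sm + B * sp ≤ M := le_max_right _ _
  -- evaluate the quadratic form at `(sp, sm)`: `M * (sp + sm)` dominates it, so `0 ≤ M`
  have hM : 0 ≤ M := by
    have hQ : 0 ≤ (sp + sm) * M := by
      nlinarith [smallestEigenvalue_mul_le Ap Am B sp sm, mul_le_mul_of_nonneg_left hM₁ hsp,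
        mul_le_mul_of_nonneg_left hM₂ hsm,
        mul_nonneg hlam.le (add_nonneg (sq_nonneg sp) (sq_nonneg sm))]
    by_contra! hneg
    have hsp0 : sp = 0 := by nlinarith
    have hsm0 : sm = 0 := by nlinarith
    simp only [hsp0, hsm0, mul_zero, add_zero] at hM₁
    linarith
  have hlin : 2 * M < lam * (a + b) := by rwa [div_lt_iff₀' hlam] at hab
  have hpos : 0 < a + b := by nlinarith
  calc 0 < (a + b) * (lam * (a + b) - 2 * M) / 2 := by nlinarith
    _ ≤ lam * (a ^ 2 + b ^ 2) - M * (a + b) := by nlinarith [sq_nonneg (a - b)]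
    _ ≤ (Ap * a ^ 2 + 2 * B * a * b + Am * b ^ 2)
          - ((Ap * sp + B * sm) * a + (Am * sm + B * sp) * b) := by
        nlinarith [smallestEigenvalue_mul_le Ap Am B a b, mul_le_mul_of_nonneg_right hM₁ ha,
          mul_le_mul_of_nonneg_right hM₂ hb]
    _ = _ := by ring

theorem IsLocalMax.inner_lap2_add_nonpos {ψ φ : EuclideanSpace ℝ (Fin 2) → ℂ}
    {x : EuclideanSpace ℝ (Fin 2)} (hψ : ContDiffAt ℝ 2 ψ x) (hφ : ContDiffAt ℝ 2 φ x)
    (hmax : IsLocalMax (fun y => ‖ψ y‖ ^ 2 + ‖φ y‖ ^ 2) x) :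
    ⟪ψ x, lap2 ψ x⟫_ℝ + ⟪φ x, lap2 φ x⟫_ℝ ≤ 0 := by
  simp only [lap2, inner_sum, ← Finset.sum_add_distrib]
  exact Finset.sum_nonpos fun i _ => hmax.inner_fderiv_fderiv_add_nonpos hψ hφ _

theorem Complex.real_inner_ofReal_mul_self (r : ℝ) (z : ℂ) :
    ⟪z, (r : ℂ) * z⟫_ℝ = r * ‖z‖ ^ 2 := by
  rw [← Complex.real_smul, real_inner_smul_right, real_inner_self_eq_norm_sq]

theorem le_max_of_isMaxOn_closure {X : Type*} [PseudoMetricSpace X] [ProperSpace X] {Ω : Set X}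
    (hΩ : Bornology.IsBounded Ω) {v : X → ℝ} (hv : ContinuousOn v (closure Ω)) {c d : ℝ}
    (hinterior : ∀ x ∈ Ω, IsMaxOn v (closure Ω) x → v x ≤ c)
    (hfrontier : ∀ x ∈ frontier Ω, v x ≤ d) :
    ∀ x ∈ Ω, v x ≤ max c d := by
  intro x hx
  obtain ⟨x₀, hx₀, hmax⟩ :=
    hΩ.isCompact_closure.exists_isMaxOn ⟨x, subset_closure hx⟩ hv
  have hvx : v x ≤ v x₀ := hmax (subset_closure hx)
  by_cases hx₀Ω : x₀ ∈ Ω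
  · exact le_max_of_le_left (hvx.trans (hinterior x₀ hx₀Ω hmax))
  · have hx₀fr : x₀ ∈ frontier Ω := ⟨hx₀, fun h => hx₀Ω (interior_subset h)⟩
    exact le_max_of_le_right (hvx.trans (hfrontier x₀ hx₀fr))

theorem a_priori_bound_general (Ap Am B tp tm lamS M : ℝ)
    (hAp : 0 < Ap) (hB : B ^ 2 < Ap * Am)
    (hlamS : lamS = ((Ap + Am) - Real.sqrt ((Ap - Am) ^ 2 + 4 * B ^ 2)) / 2)
    (hM : M = max (Ap * tp ^ 2 + B * tm ^ 2) (Am * tm ^ 2 + B * tp ^ 2))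
    (Ω : Set (EuclideanSpace ℝ (Fin 2))) (hΩopen : IsOpen Ω)
    (hΩbdd : Bornology.IsBounded Ω)
    (ψp ψm : EuclideanSpace ℝ (Fin 2) → ℂ)
    (hψp : ContDiffOn ℝ 2 ψp (closure Ω)) (hψm : ContDiffOn ℝ 2 ψm (closure Ω))
    (heqp : ∀ x ∈ Ω, -(lap2 ψp x) =
      -(((Ap * (‖ψp x‖ ^ 2 - tp ^ 2) + B * (‖ψm x‖ ^ 2 - tm ^ 2)) : ℝ) : ℂ) * ψp x)
    (heqm : ∀ x ∈ Ω, -(lap2 ψm x) =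
      -(((Am * (‖ψm x‖ ^ 2 - tm ^ 2) + B * (‖ψp x‖ ^ 2 - tp ^ 2)) : ℝ) : ℂ) * ψm x)
    (hbdry : ∀ x ∈ frontier Ω, ‖ψp x‖ ^ 2 + ‖ψm x‖ ^ 2 ≤ tp ^ 2 + tm ^ 2) :
    (∀ x₀ ∈ Ω,
      IsMaxOn (fun x => ‖ψp x‖ ^ 2 + ‖ψm x‖ ^ 2) (closure Ω) x₀ →
      2 * M / lamS < ‖ψp x₀‖ ^ 2 + ‖ψm x₀‖ ^ 2 → False) ∧
    ∀ x ∈ Ω, ‖ψp x‖ ^ 2 + ‖ψm x‖ ^ 2 ≤ max (2 * M / lamS) (tp ^ 2 + tm ^ 2) := by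
  have hno_large_interior_max : ∀ x₀ ∈ Ω,
      IsMaxOn (fun x => ‖ψp x‖ ^ 2 + ‖ψm x‖ ^ 2) (closure Ω) x₀ →
      2 * M / lamS < ‖ψp x₀‖ ^ 2 + ‖ψm x₀‖ ^ 2 → False := by
    intro x₀ hx₀ hmax hlarge
    have hnhds : closure Ω ∈ 𝓝 x₀ := mem_of_superset (hΩopen.mem_nhds hx₀) subset_closure
    have hlap := (hmax.isLocalMax hnhds).inner_lap2_add_nonpos
      (hψp.contDiffAt hnhds) (hψm.contDiffAt hnhds)
    have hlapp := heqp x₀ hx₀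
    have hlapm := heqm x₀ hx₀
    rw [neg_mul, neg_inj] at hlapp hlapm
    rw [hlapp, hlapm, Complex.real_inner_ofReal_mul_self,
      Complex.real_inner_ofReal_mul_self] at hlap
    subst hlamS hM
    have hpotential := coupled_potential_pos hAp hB (sq_nonneg tp) (sq_nonneg tm)
      (sq_nonneg ‖ψp x₀‖) (sq_nonneg ‖ψm x₀‖) hlarge
    linarith
  refine ⟨hno_large_interior_max, le_max_of_isMaxOn_closure hΩbdd ?_
    (fun x hx hmax => not_lt.1 (hno_large_interior_max x hx hmax)) hbdry⟩
  exact (hψp.continuousOn.norm.pow 2).add (hψm.continuousOn.norm.pow 2)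

theorem a_priori_bound (Ap Am B tp tm lamS M : ℝ)
    (hAp : 0 < Ap) (hAm : 0 < Am) (hB : B ^ 2 < Ap * Am)
    (htp : 0 < tp) (htm : 0 < tm)
    (hlamS : lamS = ((Ap + Am) - Real.sqrt ((Ap - Am) ^ 2 + 4 * B ^ 2)) / 2)
    (hM : M = max (Ap * tp ^ 2 + B * tm ^ 2) (Am * tm ^ 2 + B * tp ^ 2))
    (Ω : Set (EuclideanSpace ℝ (Fin 2))) (hΩopen : IsOpen Ω)
    (hΩbdd : Bornology.IsBounded Ω)
    (ψp ψm : EuclideanSpace ℝ (Fin 2) → ℂ)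
    (hψp : ContDiffOn ℝ 2 ψp (closure Ω)) (hψm : ContDiffOn ℝ 2 ψm (closure Ω))
    (heqp : ∀ x ∈ Ω, -(lap2 ψp x) =
      -(((Ap * (‖ψp x‖ ^ 2 - tp ^ 2) + B * (‖ψm x‖ ^ 2 - tm ^ 2)) : ℝ) : ℂ) * ψp x)
    (heqm : ∀ x ∈ Ω, -(lap2 ψm x) =
      -(((Am * (‖ψm x‖ ^ 2 - tm ^ 2) + B * (‖ψp x‖ ^ 2 - tp ^ 2)) : ℝ) : ℂ) * ψm x)
    (hbdry : ∀ x ∈ frontier Ω, ‖ψp x‖ ^ 2 + ‖ψm x‖ ^ 2 ≤ tp ^ 2 + tm ^ 2) :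
    (∀ x₀ ∈ Ω,
      IsMaxOn (fun x => ‖ψp x‖ ^ 2 + ‖ψm x‖ ^ 2) (closure Ω) x₀ →
      2 * M / lamS < ‖ψp x₀‖ ^ 2 + ‖ψm x₀‖ ^ 2 → False) ∧
    ∀ x ∈ Ω, ‖ψp x‖ ^ 2 + ‖ψm x‖ ^ 2 ≤ max (2 * M / lamS) (tp ^ 2 + tm ^ 2) :=
  a_priori_bound_general Ap Am B tp tm lamS M hAp hB hlamS hM Ω hΩopen hΩbdd ψp ψm hψp hψm heqp heqm
    hbdry
end
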